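/- arXiv:2112.02825 — 2 statements merged into one kernel-verified Lean document; each statement's English description precedes it below -/
import Mathlib

section
/- Let T be a rooted tree with strictly antitone depth and S(x,y) := Depth(LCA(x,y)). If nodes x_j, x_k are given with known label S(x_j, x_k) = s, and u is a node with S(x_j, u) < S(x_j, x_k), then S(x_k, u) = S(x_j, u). (Label transfer: the relation of u to x_k equals its relation to x_j.) -/
/-- Label transfer: if `S(x_j, x_k) = s` and `S(x_j, u) < S(x_j, x_k)`, then
`S(x_k, u) = S(x_j, u)`, where `S(x,y) = Depth(LCA(x,y))`. -/
theorem stmt_9 {T : Type*} [Fintype T] [PartialOrder T] [OrderTop T]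
    (hchain : ∀ a x y : T, a ≤ x → a ≤ y → x ≤ y ∨ y ≤ x)
    (lca : T → T → T)
    (hle₁ : ∀ x y : T, x ≤ lca x y) (hle₂ : ∀ x y : T, y ≤ lca x y)
    (hlub : ∀ x y z : T, x ≤ z → y ≤ z → lca x y ≤ z)
    (depth : T → ℕ) (hdepth : StrictAnti depth)
    (S : T → T → ℕ) (hS : ∀ x y, S x y = depth (lca x y))
    (xj xk u : T) (s : ℕ) (hs : S xj xk = s)
    (h : S xj u < S xj xk) :
    S xk u = S xj u := by
  rw [hS, hS] at h ⊢
  -- lca xj xk < lca xj u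
  have hcomp := hchain xj (lca xj xk) (lca xj u) (hle₁ _ _) (hle₁ _ _)
  have hlt : lca xj xk ≤ lca xj u := by
    rcases hcomp with h1 | h1
    · exact h1
    · exact absurd (hdepth.antitone h1) (by omega)
  have h1 : lca xk u ≤ lca xj u :=
    hlub _ _ _ (le_trans (hle₂ xj xk) hlt) (hle₂ _ _)
  have h2 : lca xj u ≤ lca xk u := by
    rcases hchain xk (lca xj xk) (lca xk u) (hle₂ _ _) (hle₁ _ _) with h3 | h3
    · exact hlub _ _ _ (le_trans (hle₁ xj xk) h3) (hle₂ _ _)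
    · have : lca xj u ≤ lca xj xk :=
        hlub _ _ _ (hle₁ _ _) (le_trans (hle₂ xk u) h3)
      exact absurd (hdepth.antitone this) (by omega)
  rw [le_antisymm h1 h2]
end

section
/- Let T be a rooted tree with strictly antitone depth and S(x,y) := Depth(LCA(x,y)). Suppose A, B, C, D are nodes with S(A,B) > S(A,C) and S(C,D) > S(C,A). Then S(B,D) = S(A,C). -/
/-- Two-step triplet consistency: if `S(A,B) > S(A,C)` and `S(C,D) > S(C,A)`,
then `S(B,D) = S(A,C)`, where `S(x,y) = Depth(LCA(x,y))`. -/
theorem stmt_12 {T : Type*} [Fintype T] [PartialOrder T] [OrderTop T]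
    (hchain : ∀ a x y : T, a ≤ x → a ≤ y → x ≤ y ∨ y ≤ x)
    (lca : T → T → T)
    (hle₁ : ∀ x y : T, x ≤ lca x y) (hle₂ : ∀ x y : T, y ≤ lca x y)
    (hlub : ∀ x y z : T, x ≤ z → y ≤ z → lca x y ≤ z)
    (depth : T → ℕ) (hdepth : StrictAnti depth)
    (S : T → T → ℕ) (hS : ∀ x y, S x y = depth (lca x y))
    (A B C D : T) (h₁ : S A B > S A C) (h₂ : S C D > S C A) :
    S B D = S A C := by
  have hsymm : lca C A = lca A C :=
    le_antisymm (hlub _ _ _ (hle₂ A C) (hle₁ A C)) (hlub _ _ _ (hle₂ C A) (hle₁ C A))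
  simp only [hS] at h₁ h₂ ⊢
  rw [hsymm] at h₂
  have hAB : lca A B < lca A C := by
    rcases hchain A _ _ (hle₁ A B) (hle₁ A C) with h | h
    · exact lt_of_le_of_ne h (fun e => by simp [e] at h₁)
    · exact absurd (hdepth.antitone h) (by omega)
  have hCD : lca C D < lca A C := by
    rcases hchain C _ _ (hle₁ C D) (hle₂ A C) with h | h
    · exact lt_of_le_of_ne h (fun e => by simp [e] at h₂)
    · exact absurd (hdepth.antitone h) (by omega)
  have hB : B ≤ lca A C := le_trans (hle₂ A B) hAB.le
  have hD : D ≤ lca A C := le_trans (hle₂ C D) hCD.le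
  have hBD : lca B D ≤ lca A C := hlub _ _ _ hB hD
  have hge : lca A C ≤ lca B D := by
    by_contra hcon
    have hlt : lca B D < lca A C := lt_of_le_of_ne hBD (fun e => hcon (e ▸ le_refl _))
    rcases hchain B _ _ (hle₁ B D) (hle₂ A B) with h | h
    · have hD' : D ≤ lca A B := le_trans (hle₂ B D) h
      rcases hchain D _ _ hD' (hle₂ C D) with h' | h'
      · exact absurd (hlub A C _ (le_trans (hle₁ A B) h') (hle₁ C D)) (not_le_of_gt hCD)
      · exact absurd (hlub A C _ (hle₁ A B) (le_trans (hle₁ C D) h')) (not_le_of_gt hAB)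
    · have hA : A ≤ lca B D := le_trans (hle₁ A B) h
      rcases hchain D _ _ (hle₂ B D) (hle₂ C D) with h' | h'
      · exact absurd (hlub A C _ (le_trans hA h') (hle₁ C D)) (not_le_of_gt hCD)
      · exact absurd (hlub A C _ hA (le_trans (hle₁ C D) h')) (not_le_of_gt hlt)
  rw [le_antisymm hBD hge]
end
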